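/- Let φ : (A, d_A) → (B, d_B) be a morphism of finite-type CDGAs over a field k, and let q ≥ 1. Suppose φ^i : A^i → B^i is an isomorphism for all i ≤ q and is injective for i = q+1. Then the induced map MC(A) → MC(B), a ↦ φ(a), is a bijection, and for every a ∈ MC(A): dim_k H^i(A, δ_a) = dim_k H^i(B, δ_{φ(a)}) for all i ≤ q, and dim_k H^{q+1}(A, δ_a) ≤ dim_k H^{q+1}(B, δ_{φ(a)}). Consequently φ identifies R^i_s(A) with R^i_s(B) for all i ≤ q and sends R^{q+1}_s(A) into R^{q+1}_s(B), for all s ≥ 0. -/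

import Mathlib

set_option synthInstance.maxHeartbeats 1000000
set_option maxHeartbeats 1000000


open scoped TensorProduct DirectSum

/-- A commutative differential graded algebra (CDGA) over a field `k`:
an ℕ-graded, associative, unital, graded-commutative `k`-algebra together with a
degree `+1` differential satisfying `d ∘ d = 0` and the graded Leibniz rule. -/
structure CDGA (k : Type) [Field k] : Type 1 where
  carrier : Type
  [ringCarrier : Ring carrier]
  [algebraCarrier : Algebra k carrier]
  grading : ℕ → Submodule k carrier
  [gradedAlgebra : GradedAlgebra grading]
  gcomm : ∀ ⦃i j : ℕ⦄ ⦃u v : carrier⦄, u ∈ grading i → v ∈ grading j →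
    u * v = ((-1 : k) ^ (i * j)) • (v * u)
  d : carrier →ₗ[k] carrier
  d_mem : ∀ ⦃i : ℕ⦄ ⦃u : carrier⦄, u ∈ grading i → d u ∈ grading (i + 1)
  d_sq : ∀ u : carrier, d (d u) = 0
  leibniz : ∀ ⦃i j : ℕ⦄ ⦃u v : carrier⦄, u ∈ grading i → v ∈ grading j →
    d (u * v) = d u * v + ((-1 : k) ^ i) • (u * d v)

attribute [instance] CDGA.ringCarrier CDGA.algebraCarrier CDGA.gradedAlgebra

namespace CDGA

variable {k : Type} [Field k]

/-- A CDGA is of finite type if each graded piece is finite-dimensional. -/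
def FiniteType (A : CDGA k) : Prop := ∀ i : ℕ, FiniteDimensional k (A.grading i)

/-- A CDGA is connected if its degree-0 part is the span of the unit. -/
def Connected (A : CDGA k) : Prop :=
  ∀ u ∈ A.grading 0, ∃ c : k, u = algebraMap k A.carrier c

/-- The Maurer–Cartan condition: `a·a + d a = 0` for `a ∈ A¹`. -/
def IsMC (A : CDGA k) (a : A.grading 1) : Prop :=
  (a : A.carrier) * (a : A.carrier) + A.d (a : A.carrier) = 0

/-- The differential `δ_a(u) = a·u + d u` of the Aomoto complex, in degree `q`. -/
noncomputable def delta (A : CDGA k) (a : A.grading 1) (q : ℕ) :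
    A.grading q →ₗ[k] A.grading (q + 1) where
  toFun u := ⟨(a : A.carrier) * (u : A.carrier) + A.d (u : A.carrier), by
    have h1 : (a : A.carrier) * (u : A.carrier) ∈ A.grading (1 + q) :=
      SetLike.mul_mem_graded a.2 u.2
    rw [add_comm] at h1
    exact Submodule.add_mem _ h1 (A.d_mem u.2)⟩
  map_add' u v := by
    ext
    simp only [Submodule.coe_add, mul_add, map_add]
    abel
  map_smul' c u := by
    ext
    simp only [SetLike.val_smul, RingHom.id_apply, Submodule.coe_smul, map_smul,
      mul_smul_comm, smul_add]

/-- Cocycles of the Aomoto complex in degree `q`. -/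
noncomputable def cocycles (A : CDGA k) (a : A.grading 1) (q : ℕ) :
    Submodule k (A.grading q) :=
  LinearMap.ker (A.delta a q)

/-- Coboundaries of the Aomoto complex in degree `q`. -/
noncomputable def coboundaries (A : CDGA k) (a : A.grading 1) : (q : ℕ) → Submodule k (A.grading q)
  | 0 => ⊥
  | (q + 1) => LinearMap.range (A.delta a q)

/-- Cohomology of the Aomoto complex `H^q(A, δ_a)`. -/
abbrev cohomology (A : CDGA k) (a : A.grading 1) (q : ℕ) :=
  @HasQuotient.Quotient (A.cocycles a q) _ Submodule.hasQuotient
    ((A.coboundaries a q).comap (A.cocycles a q).subtype)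

/-- `dim_k H^q(A, δ_a)`. -/
noncomputable def hdim (A : CDGA k) (a : A.grading 1) (q : ℕ) : ℕ :=
  Module.finrank k (A.cohomology a q)

/-- The resonance variety `R^q_s(A) = {a ∈ MC(A) : dim_k H^q(A, δ_a) ≥ s}`. -/
noncomputable def Res (A : CDGA k) (q s : ℕ) : Set (A.grading 1) :=
  {a | A.IsMC a ∧ s ≤ A.hdim a q}

/-- A morphism of CDGAs: a `k`-algebra map preserving degrees and differentials. -/
structure Hom (A B : CDGA k) where
  toAlgHom : A.carrier →ₐ[k] B.carrier
  map_mem : ∀ ⦃i : ℕ⦄ ⦃u : A.carrier⦄, u ∈ A.grading i → toAlgHom u ∈ B.grading i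
  map_d : ∀ u : A.carrier, toAlgHom (A.d u) = B.d (toAlgHom u)

/-- The restriction `φ^i : A^i → B^i` of a CDGA morphism. -/
def Hom.res {A B : CDGA k} (φ : Hom A B) (i : ℕ) : A.grading i →ₗ[k] B.grading i where
  toFun u := ⟨φ.toAlgHom u, φ.map_mem u.2⟩
  map_add' u v := by ext; simp
  map_smul' c u := by ext; simp

/-- Composition of CDGA morphisms. -/
def Hom.comp {A B C : CDGA k} (ψ : Hom B C) (φ : Hom A B) : Hom A C where
  toAlgHom := ψ.toAlgHom.comp φ.toAlgHom
  map_mem := fun _ _ hu => ψ.map_mem (φ.map_mem hu)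
  map_d := fun u => by
    simp only [AlgHom.comp_apply]
    rw [φ.map_d, ψ.map_d]

end CDGA

namespace CDGA

variable {k : Type} [Field k] {A B : CDGA k}

lemma Hom.res_coe (φ : Hom A B) {i : ℕ} (u : A.grading i) :
    ((φ.res i u : B.grading i) : B.carrier) = φ.toAlgHom u := rfl

lemma delta_comm (φ : Hom A B) (a : A.grading 1) (i : ℕ) (u : A.grading i) :
    φ.res (i + 1) (A.delta a i u) = B.delta (φ.res 1 a) i (φ.res i u) := by
  ext
  show φ.toAlgHom ((a : A.carrier) * u + A.d u)
      = (φ.toAlgHom a) * (φ.toAlgHom u) + B.d (φ.toAlgHom u)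
  rw [map_add, map_mul, φ.map_d]

/-- The induced map on cocycles. -/
noncomputable def cocycleMap (φ : Hom A B) (a : A.grading 1) (i : ℕ) :
    A.cocycles a i →ₗ[k] B.cocycles (φ.res 1 a) i :=
  (φ.res i).restrict (fun u hu => by
    rw [cocycles, LinearMap.mem_ker] at hu ⊢
    rw [← delta_comm, hu, map_zero])

lemma cocycleMap_coe (φ : Hom A B) (a : A.grading 1) (i : ℕ) (u : A.cocycles a i) :
    (cocycleMap φ a i u : B.grading i) = φ.res i (u : A.grading i) := rfl

lemma mapQ_cond (φ : Hom A B) (a : A.grading 1) (i : ℕ) :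
    (A.coboundaries a i).comap (A.cocycles a i).subtype ≤
      (((B.coboundaries (φ.res 1 a) i).comap
        (B.cocycles (φ.res 1 a) i).subtype)).comap (cocycleMap φ a i) := by
  intro u hu
  simp only [Submodule.mem_comap, Submodule.subtype_apply] at hu ⊢
  cases i with
  | zero =>
    have h0 : (u : A.grading 0) = 0 := hu
    show (cocycleMap φ a 0 u : B.grading 0) ∈ (⊥ : Submodule k (B.grading 0))
    rw [Submodule.mem_bot, cocycleMap_coe, h0, map_zero]
  | succ i =>
    obtain ⟨w, hw⟩ := hu
    show (cocycleMap φ a (i + 1) u : B.grading (i + 1)) ∈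
      LinearMap.range (B.delta (φ.res 1 a) i)
    exact ⟨φ.res i w, by rw [← delta_comm, hw, cocycleMap_coe]⟩

/-- The induced map on cohomology. -/
noncomputable def Hmap (φ : Hom A B) (a : A.grading 1) (i : ℕ) :
    A.cohomology a i →ₗ[k] B.cohomology (φ.res 1 a) i :=
  Submodule.mapQ _ _ (cocycleMap φ a i) (mapQ_cond φ a i)

lemma Hmap_injective_zero (φ : Hom A B) (a : A.grading 1)
    (h0 : Function.Injective (φ.res 0)) : Function.Injective (Hmap φ a 0) := by
  rw [← LinearMap.ker_eq_bot, LinearMap.ker_eq_bot']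
  intro x hx
  obtain ⟨u, rfl⟩ := Submodule.Quotient.mk_surjective _ x
  rw [Hmap, Submodule.mapQ_apply, Submodule.Quotient.mk_eq_zero] at hx
  rw [Submodule.Quotient.mk_eq_zero]
  have h1 : (cocycleMap φ a 0 u : B.grading 0) = 0 := hx
  rw [cocycleMap_coe] at h1
  have h2 : (u : A.grading 0) = 0 := h0 (by rw [h1, map_zero])
  exact h2

lemma Hmap_injective_succ (φ : Hom A B) (a : A.grading 1) (i : ℕ)
    (hs : Function.Surjective (φ.res i)) (hi : Function.Injective (φ.res (i + 1))) :
    Function.Injective ⇑(Hmap φ a (i + 1)) := by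
  rw [← LinearMap.ker_eq_bot, LinearMap.ker_eq_bot']
  intro x hx
  obtain ⟨u, rfl⟩ := Submodule.Quotient.mk_surjective _ x
  rw [Hmap, Submodule.mapQ_apply, Submodule.Quotient.mk_eq_zero] at hx
  rw [Submodule.Quotient.mk_eq_zero]
  have h1 : (cocycleMap φ a (i + 1) u : B.grading (i + 1)) ∈
      LinearMap.range (B.delta (φ.res 1 a) i) := hx
  obtain ⟨v, hv⟩ := h1
  obtain ⟨w, rfl⟩ := hs v
  rw [← delta_comm, cocycleMap_coe] at hv
  have h2 : A.delta a i w = (u : A.grading (i + 1)) := hi hv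
  exact ⟨w, h2⟩

lemma Hmap_surjective (φ : Hom A B) (a : A.grading 1) (i : ℕ)
    (hs : Function.Surjective (φ.res i)) (hi : Function.Injective (φ.res (i + 1))) :
    Function.Surjective (Hmap φ a i) := by
  intro y
  obtain ⟨v, rfl⟩ := Submodule.Quotient.mk_surjective _ y
  obtain ⟨u, hu⟩ := hs (v : B.grading i)
  have hvz : B.delta (φ.res 1 a) i (v : B.grading i) = 0 := v.2
  have hz : A.delta a i u = 0 := by
    apply hi
    rw [delta_comm, hu, hvz, map_zero]
  refine ⟨Submodule.Quotient.mk ⟨u, hz⟩, ?_⟩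
  rw [Hmap, Submodule.mapQ_apply]
  congr 1
  apply Subtype.ext
  rw [cocycleMap_coe]
  exact hu

lemma isMC_iff (φ : Hom A B) (h2 : Function.Injective (φ.res 2)) (a : A.grading 1) :
    A.IsMC a ↔ B.IsMC (φ.res 1 a) := by
  have hmem : (a : A.carrier) * a + A.d (a : A.carrier) ∈ A.grading 2 :=
    Submodule.add_mem _ (SetLike.mul_mem_graded a.2 a.2) (A.d_mem a.2)
  have key : φ.toAlgHom ((a : A.carrier) * a + A.d (a : A.carrier))
      = ((φ.res 1 a : B.carrier)) * (φ.res 1 a : B.carrier)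
        + B.d (φ.res 1 a : B.carrier) := by
    rw [map_add, map_mul, φ.map_d]; rfl
  constructor
  · intro h
    rw [IsMC] at h ⊢
    rw [← key, h, map_zero]
  · intro h
    rw [IsMC] at h ⊢
    have h1 : φ.toAlgHom ((a : A.carrier) * a + A.d (a : A.carrier)) = 0 := key.trans h
    have h3 : φ.res 2 ⟨_, hmem⟩ = 0 := Subtype.ext h1
    have h4 : (⟨(a : A.carrier) * a + A.d (a : A.carrier), hmem⟩ : A.grading 2) = 0 :=
      h2 (by rw [h3, map_zero])
    exact congrArg Subtype.val h4

end CDGA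

/-- Let `φ : A → B` be a morphism of finite-type CDGAs over `k`
and `q ≥ 1`, with `φ^i` an isomorphism for all `i ≤ q` and injective for `i = q+1`.
Then the induced map `MC(A) → MC(B)` is a bijection; for every `a ∈ MC(A)`,
`dim_k H^i(A, δ_a) = dim_k H^i(B, δ_{φ(a)})` for all `i ≤ q` and
`dim_k H^{q+1}(A, δ_a) ≤ dim_k H^{q+1}(B, δ_{φ(a)})`; consequently `φ` identifies
`R^i_s(A)` with `R^i_s(B)` for `i ≤ q` and sends `R^{q+1}_s(A)` into `R^{q+1}_s(B)`. -/
theorem statement8 {k : Type} [Field k] (A B : CDGA k)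
    (hAf : A.FiniteType) (hBf : B.FiniteType) (φ : CDGA.Hom A B)
    (q : ℕ) (hq : 1 ≤ q)
    (hiso : ∀ i ≤ q, Function.Bijective (φ.res i))
    (hinj : Function.Injective (φ.res (q + 1))) :
    Set.BijOn (φ.res 1) {a : A.grading 1 | A.IsMC a} {b : B.grading 1 | B.IsMC b} ∧
    (∀ a : A.grading 1, A.IsMC a →
      (∀ i ≤ q, A.hdim a i = B.hdim (φ.res 1 a) i) ∧
      A.hdim a (q + 1) ≤ B.hdim (φ.res 1 a) (q + 1)) ∧
    (∀ i ≤ q, ∀ s : ℕ, (φ.res 1) '' (A.Res i s) = B.Res i s) ∧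
    (∀ s : ℕ, (φ.res 1) '' (A.Res (q + 1) s) ⊆ B.Res (q + 1) s) := by
  have hinjAll : ∀ i ≤ q + 1, Function.Injective (φ.res i) := by
    intro i hi
    rcases eq_or_lt_of_le hi with h | h
    · subst h; exact hinj
    · exact (hiso i (by omega)).injective
  have h2 : Function.Injective (φ.res 2) := hinjAll 2 (by omega)
  have hmc : ∀ a, A.IsMC a ↔ B.IsMC (φ.res 1 a) := CDGA.isMC_iff φ h2
  have e1 : Function.Bijective (φ.res 1) := hiso 1 hq
  have hdims : ∀ a : A.grading 1,
      (∀ i ≤ q, A.hdim a i = B.hdim (φ.res 1 a) i) ∧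
      A.hdim a (q + 1) ≤ B.hdim (φ.res 1 a) (q + 1) := by
    intro a
    constructor
    · intro i hi
      have hinjH : Function.Injective (CDGA.Hmap φ a i) := by
        cases i with
        | zero => exact CDGA.Hmap_injective_zero φ a (hiso 0 (by omega)).injective
        | succ j =>
          exact CDGA.Hmap_injective_succ φ a j (hiso j (by omega)).surjective
            (hinjAll (j + 1) (by omega))
      have hsurH : Function.Surjective (CDGA.Hmap φ a i) :=
        CDGA.Hmap_surjective φ a i (hiso i hi).surjective (hinjAll (i + 1) (by omega))
      simp only [CDGA.hdim]
      exact (LinearEquiv.ofBijective (CDGA.Hmap φ a i) ⟨hinjH, hsurH⟩).finrank_eq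
    · haveI := hBf (q + 1)
      have hinjH := CDGA.Hmap_injective_succ φ a q (hiso q le_rfl).surjective hinj
      simp only [CDGA.hdim]
      exact LinearMap.finrank_le_finrank_of_injective (f := CDGA.Hmap φ a (q + 1)) hinjH
  have hbij : Set.BijOn (φ.res 1) {a : A.grading 1 | A.IsMC a} {b : B.grading 1 | B.IsMC b} := by
    refine ⟨fun a ha => (hmc a).mp ha, fun a _ a' _ h => e1.injective h, ?_⟩
    intro b hb
    obtain ⟨a, rfl⟩ := e1.surjective b
    exact ⟨a, (hmc a).mpr hb, rfl⟩
  refine ⟨hbij, fun a _ => hdims a, ?_, ?_⟩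
  · intro i hi s
    ext b
    simp only [CDGA.Res, Set.mem_image, Set.mem_setOf_eq]
    constructor
    · rintro ⟨a, ⟨hamc, has⟩, rfl⟩
      exact ⟨(hmc a).mp hamc, by rw [← (hdims a).1 i hi]; exact has⟩
    · rintro ⟨hbmc, hbs⟩
      obtain ⟨a, rfl⟩ := e1.surjective b
      exact ⟨a, ⟨(hmc a).mpr hbmc, by rw [(hdims a).1 i hi]; exact hbs⟩, rfl⟩
  · intro s b hb
    simp only [CDGA.Res, Set.mem_image, Set.mem_setOf_eq] at hb ⊢
    obtain ⟨a, ⟨hamc, has⟩, rfl⟩ := hb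
    exact ⟨(hmc a).mp hamc, le_trans has (hdims a).2⟩
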